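/- arXiv:math/0112268 — 2 statements merged into one kernel-verified Lean document; each statement's English description precedes it below -/
import Mathlib

section
/- For every tree P and all nonnegative real numbers a_1,…,a_m, one has ∑_{(j_1,…,j_k) ∈ P} a_{j_1}⋯a_{j_k} ≥ inf_{p ≤ k ≤ q} ∑_{(j_1,…,j_k) ∈ L^k} a_{j_1}⋯a_{j_k}, where p = min{k : (j_1,…,j_k) ∈ P} is the length of the shortest branch of P and q = max{k : (j_1,…,j_k) ∈ P} is the length of the longest branch of P. -/
open Filter Set

/-- The index set `L^k = N_1 × ⋯ × N_k`, realized as the finset of functions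
`j : Fin k → Fin m` whose `i`-th component lies in `N (i+1)`. -/
def Lk {m : ℕ} (N : ℕ → Finset (Fin m)) (k : ℕ) : Finset (Fin k → Fin m) :=
  Finset.univ.filter fun j => ∀ i : Fin k, j i ∈ N (i + 1)

/-- Two finite sequences agree on their common initial segment. -/
def AgreesWith {m : ℕ} (x y : (k : ℕ) × (Fin k → Fin m)) : Prop :=
  ∀ (q : ℕ) (hx : q < x.1) (hy : q < y.1), x.2 ⟨q, hx⟩ = y.2 ⟨q, hy⟩

/-- A finite set `P` of finite sequences (elements of `K = ⋃_k L^k`) is a tree if every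
sequence `(j_1,…,j_k) ∈ K` agrees with some `(i_1,…,i_p) ∈ P` on the first `min {k,p}`
places, and moreover this element of `P` is unique among those with `p ≤ k`. -/
def IsTree {m : ℕ} (N : ℕ → Finset (Fin m)) (P : Finset ((k : ℕ) × (Fin k → Fin m))) :
    Prop :=
  (∀ x ∈ P, 1 ≤ x.1 ∧ ∀ i : Fin x.1, x.2 i ∈ N (i + 1)) ∧
  ∀ k : ℕ, 1 ≤ k → ∀ j : Fin k → Fin m, (∀ i : Fin k, j i ∈ N (i + 1)) →
    (∃ y ∈ P, AgreesWith ⟨k, j⟩ y) ∧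
    ∀ y ∈ P, y.1 ≤ k → AgreesWith ⟨k, j⟩ y →
      ∀ y' ∈ P, y'.1 ≤ k → AgreesWith ⟨k, j⟩ y' → y = y'

/-!
Write `c n = ∑_{j ∈ N_n} a_j` and `D k = c 1 ⋯ c k`, which is `∑_{L^k} a_{j_1}⋯a_{j_k}`.
With `q` the height of `P`, every `j ∈ L^q` extends exactly one branch `x ∈ P`, and the extensions
of `x` contribute `w x · T x` to `D q`, where `w x = ∏ a_{x_i}` and `T x = c (|x| + 1) ⋯ c q`.
Since `D |x| · T x = D q` and `μ = min_{p ≤ k ≤ q} D k ≤ D |x|`, this gives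
`μ · D q ≤ (∑_{x ∈ P} w x) · D q`; if instead `D q = 0`, then `μ ≤ D q = 0`.
-/

section Ordered

variable {R : Type*} [CommSemiring R] [LinearOrder R] [IsStrictOrderedRing R]

theorem le_sum_of_sum_mul_eq {ι : Type*} {s : Finset ι} {w d T : ι → R} {D μ : R}
    (hw : ∀ x ∈ s, 0 ≤ w x) (hT : ∀ x ∈ s, 0 ≤ T x) (hD : 0 ≤ D)
    (hdT : ∀ x ∈ s, d x * T x = D) (hμd : ∀ x ∈ s, μ ≤ d x) (hμD : μ ≤ D)
    (hsum : ∑ x ∈ s, w x * T x = D) : μ ≤ ∑ x ∈ s, w x := by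
  rcases hD.eq_or_lt with hD0 | hDpos
  · exact hμD.trans (hD0 ▸ Finset.sum_nonneg hw)
  refine le_of_mul_le_mul_right ?_ hDpos
  calc μ * D = ∑ x ∈ s, w x * (μ * T x) := by
        rw [← hsum, Finset.mul_sum]
        exact Finset.sum_congr rfl fun x _ => by ring
    _ ≤ ∑ x ∈ s, w x * D := by
        gcongr with x hx
        · exact hw x hx
        · rw [← hdT x hx]
          exact mul_le_mul_of_nonneg_right (hμd x hx) (hT x hx)
    _ = (∑ x ∈ s, w x) * D := (Finset.sum_mul _ _ _).symm

end Ordered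

section Trees

variable {m : ℕ} {N : ℕ → Finset (Fin m)}

theorem mem_Lk {k : ℕ} {j : Fin k → Fin m} : j ∈ Lk N k ↔ ∀ i : Fin k, j i ∈ N (i + 1) := by
  simp [Lk]

theorem Lk_eq_piFinset (k : ℕ) : Lk N k = Fintype.piFinset fun i : Fin k => N (i + 1) := by
  ext j
  simp [mem_Lk]

theorem sum_Lk_prod {R : Type*} [CommSemiring R] (a : Fin m → R) (k : ℕ) :
    ∑ j ∈ Lk N k, ∏ i, a (j i) = ∏ n ∈ Finset.range k, ∑ j ∈ N (n + 1), a j := by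
  rw [Lk_eq_piFinset, ← Finset.prod_univ_sum]
  exact Fin.prod_univ_eq_prod_range (fun n => ∑ j ∈ N (n + 1), a j) k

open Classical in
variable (N) in
noncomputable def extensions (q : ℕ) (x : (k : ℕ) × (Fin k → Fin m)) :
    Finset (Fin q → Fin m) :=
  (Lk N q).filter fun j => AgreesWith ⟨q, j⟩ x

open Classical in
theorem mem_extensions {q : ℕ} {x : (k : ℕ) × (Fin k → Fin m)} {j : Fin q → Fin m} :
    j ∈ extensions N q x ↔ j ∈ Lk N q ∧ AgreesWith ⟨q, j⟩ x :=
  Finset.mem_filter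

theorem extensions_eq_piFinset {q : ℕ} {x : (k : ℕ) × (Fin k → Fin m)}
    (hx : ∀ i : Fin x.1, x.2 i ∈ N (i + 1)) :
    extensions N q x = Fintype.piFinset fun i : Fin q =>
      if h : (i : ℕ) < x.1 then {x.2 ⟨i, h⟩} else N (i + 1) := by
  ext j
  simp only [mem_extensions, mem_Lk, Fintype.mem_piFinset, AgreesWith]
  constructor
  · rintro ⟨hjN, hagree⟩ i
    split_ifs with h
    · exact Finset.mem_singleton.mpr (hagree i i.isLt h)
    · exact hjN i
  · intro hj
    have hbranch : ∀ (i : Fin q) (h : (i : ℕ) < x.1), j i = x.2 ⟨i, h⟩ := fun i h => by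
      simpa [h] using hj i
    refine ⟨fun i => ?_, fun t ht h => hbranch ⟨t, ht⟩ h⟩
    by_cases h : (i : ℕ) < x.1
    · exact hbranch i h ▸ hx ⟨i, h⟩
    · simpa [h] using hj i

theorem sum_extensions_prod {R : Type*} [CommSemiring R] (a : Fin m → R) {q : ℕ}
    {x : (k : ℕ) × (Fin k → Fin m)} (hx : ∀ i : Fin x.1, x.2 i ∈ N (i + 1)) (hxq : x.1 ≤ q) :
    ∑ j ∈ extensions N q x, ∏ i, a (j i) =
      (∏ i, a (x.2 i)) * ∏ n ∈ Finset.Ico x.1 q, ∑ j ∈ N (n + 1), a j := by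
  set g : ℕ → R := fun n => if h : n < x.1 then a (x.2 ⟨n, h⟩) else ∑ j ∈ N (n + 1), a j
  rw [extensions_eq_piFinset hx, ← Finset.prod_univ_sum]
  calc ∏ i : Fin q, ∑ n ∈ (if h : (i : ℕ) < x.1 then {x.2 ⟨i, h⟩} else N (i + 1)), a n
      = ∏ i : Fin q, g i := Finset.prod_congr rfl fun i _ => by
        by_cases h : (i : ℕ) < x.1 <;> simp [g, h]
    _ = (∏ n ∈ Finset.range x.1, g n) * ∏ n ∈ Finset.Ico x.1 q, g n := by
        rw [Fin.prod_univ_eq_prod_range, Finset.prod_range_mul_prod_Ico _ hxq]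
    _ = _ := by
        congr 1
        · rw [← Fin.prod_univ_eq_prod_range]
          exact Finset.prod_congr rfl fun i _ => by simp [g]
        · exact Finset.prod_congr rfl fun n hn => by
            simp [g, (Finset.mem_Ico.mp hn).1]

theorem IsTree.biUnion_extensions {P : Finset ((k : ℕ) × (Fin k → Fin m))} (hP : IsTree N P)
    {q : ℕ} (hq : 1 ≤ q) : P.biUnion (extensions N q) = Lk N q := by
  ext j
  simp only [Finset.mem_biUnion, mem_extensions]
  refine ⟨fun ⟨_, _, hj, _⟩ => hj, fun hj => ?_⟩
  obtain ⟨x, hx, hagree⟩ := (hP.2 q hq j (mem_Lk.mp hj)).1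
  exact ⟨x, hx, hj, hagree⟩

theorem IsTree.pairwiseDisjoint_extensions {P : Finset ((k : ℕ) × (Fin k → Fin m))}
    (hP : IsTree N P) {q : ℕ} (hq : 1 ≤ q) (hPq : ∀ x ∈ P, x.1 ≤ q) :
    (P : Set ((k : ℕ) × (Fin k → Fin m))).PairwiseDisjoint (extensions N q) := by
  intro x hx y hy hxy
  refine Finset.disjoint_left.mpr fun j hjx hjy => hxy ?_
  rw [mem_extensions] at hjx hjy
  exact (hP.2 q hq j (mem_Lk.mp hjx.1)).2 x hx (hPq x hx) hjx.2 y hy (hPq y hy) hjy.2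

theorem IsTree.sum_prod_mul_prod_Ico {R : Type*} [CommSemiring R]
    {P : Finset ((k : ℕ) × (Fin k → Fin m))} (hP : IsTree N P) (a : Fin m → R) {q : ℕ}
    (hq : 1 ≤ q) (hPq : ∀ x ∈ P, x.1 ≤ q) :
    ∑ x ∈ P, (∏ i, a (x.2 i)) * ∏ n ∈ Finset.Ico x.1 q, ∑ j ∈ N (n + 1), a j =
      ∏ n ∈ Finset.range q, ∑ j ∈ N (n + 1), a j := by
  rw [← sum_Lk_prod, ← hP.biUnion_extensions hq,
    Finset.sum_biUnion (hP.pairwiseDisjoint_extensions hq hPq)]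
  exact Finset.sum_congr rfl fun x hx => (sum_extensions_prod a (hP.1 x hx).2 (hPq x hx)).symm

end Trees

/-- For any tree `P` and nonnegative numbers `a_1,…,a_m`:
`∑_{(j_1,…,j_k) ∈ P} a_{j_1}⋯a_{j_k} ≥ inf_{p ≤ k ≤ q} ∑_{(j_1,…,j_k) ∈ L^k} a_{j_1}⋯a_{j_k}`,
where `p` (resp. `q`) is the length of the shortest (resp. longest) branch of `P`. -/
theorem stmt3 {m : ℕ} (N : ℕ → Finset (Fin m))
    (P : Finset ((k : ℕ) × (Fin k → Fin m))) (hP : IsTree N P) (hPne : P.Nonempty)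
    (a : Fin m → ℝ) (ha : ∀ j, 0 ≤ a j) :
    (Finset.Icc (P.inf' hPne fun x => x.1) (P.sup' hPne fun x => x.1)).inf'
        (Finset.nonempty_Icc.mpr (by
          obtain ⟨x, hx⟩ := hPne
          exact le_trans (Finset.inf'_le _ hx) (Finset.le_sup' _ hx)))
        (fun k => ∑ j ∈ Lk N k, ∏ i, a (j i)) ≤
      ∑ x ∈ P, ∏ i, a (x.2 i) := by
  set q := P.sup' hPne fun x => x.1
  set D : ℕ → ℝ := fun k => ∏ n ∈ Finset.range k, ∑ j ∈ N (n + 1), a j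
  have hPq : ∀ x ∈ P, x.1 ≤ q := fun x hx => Finset.le_sup' (fun x => x.1) hx
  have hq : 1 ≤ q := (hP.1 _ hPne.choose_spec).1.trans (hPq _ hPne.choose_spec)
  have hc : ∀ n, 0 ≤ ∑ j ∈ N n, a j := fun n => Finset.sum_nonneg fun j _ => ha j
  have hpq : (P.inf' hPne fun x => x.1) ≤ q :=
    Finset.inf'_le_of_le _ hPne.choose_spec (hPq _ hPne.choose_spec)
  have hμ : ∀ k ∈ Finset.Icc (P.inf' hPne fun x => x.1) q,
      (Finset.Icc _ q).inf' (Finset.nonempty_Icc.mpr hpq)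
        (fun k => ∑ j ∈ Lk N k, ∏ i, a (j i)) ≤ D k := fun k hk =>
    (Finset.inf'_le _ hk).trans_eq (sum_Lk_prod a k)
  refine le_sum_of_sum_mul_eq (d := fun x => D x.1) (fun x _ => Finset.prod_nonneg fun i _ => ha _)
    (fun x _ => Finset.prod_nonneg fun n _ => hc _) (Finset.prod_nonneg fun n _ => hc _)
    (fun x hx => Finset.prod_range_mul_prod_Ico _ (hPq x hx))
    (fun x hx => hμ _ (Finset.mem_Icc.mpr ⟨Finset.inf'_le (fun x => x.1) hx, hPq x hx⟩))
    (hμ q (Finset.mem_Icc.mpr ⟨hpq, le_rfl⟩)) (hP.sum_prod_mul_prod_Ico a hq hPq)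
end

section
/- Suppose the open set condition holds with bounded open set V. Then (ψ^k(V̄))_k is a decreasing sequence of compact sets, and the limit set E of Theorem 1 satisfies E = ⋂_{k=1}^∞ ψ^k(V̄), where V̄ denotes the closure of V. -/
/-!
Since each `ψ_j` maps `V̄` into itself, every cylinder of level `k + 1` lies in one of level `k`,
so the compact sets `ψ^k(V̄)` decrease. Their Hausdorff distance to `E` tends to `0`: a point of
`E` is therefore arbitrarily close to every later, hence smaller, `ψ^k(V̄)`, so it lies in each
of them; and a point of all `ψ^k(V̄)` is at distance `0` from the closed set `E`.
-/

open Metric Filter Set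

/-- The composition `ψ_{j 0} ∘ ψ_{j 1} ∘ ⋯ ∘ ψ_{j (k-1)}`. -/
noncomputable def iterMap {X : Type*} {m : ℕ} (ψ : Fin m → X → X) :
    (k : ℕ) → (Fin k → Fin m) → X → X
  | 0, _ => id
  | k + 1, j => ψ (j 0) ∘ iterMap ψ k (fun i => j i.succ)

/-- `ψ^k(F) = ⋃_{(j_1,…,j_k) ∈ L^k} (ψ_{j_1} ∘ ⋯ ∘ ψ_{j_k})(F)`. -/
noncomputable def psiImage {X : Type*} {m : ℕ} (ψ : Fin m → X → X)
    (N : ℕ → Finset (Fin m)) (k : ℕ) (F : Set X) : Set X :=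
  ⋃ j ∈ Lk N k, iterMap ψ k j '' F

lemma continuous_of_dist_eq_mul {X Y : Type*} [PseudoMetricSpace X] [PseudoMetricSpace Y]
    {f : X → Y} {r : ℝ} (hf : ∀ x y, dist (f x) (f y) = r * dist x y) : Continuous f :=
  (LipschitzWith.of_dist_le_mul (K := Real.nnabs r) fun x y => by
    rw [hf, Real.coe_nnabs]
    exact mul_le_mul_of_nonneg_right (le_abs_self r) dist_nonneg).continuous

lemma iterMap_succ' {X : Type*} {m : ℕ} (ψ : Fin m → X → X) :
    ∀ (k : ℕ) (j : Fin (k + 1) → Fin m),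
      iterMap ψ (k + 1) j = iterMap ψ k (fun i => j i.castSucc) ∘ ψ (j (Fin.last k))
  | 0, _ => rfl
  | k + 1, j => by
    change ψ (j 0) ∘ iterMap ψ (k + 1) (fun i => j i.succ) = _
    rw [iterMap_succ' ψ k]
    simp [iterMap, Fin.succ_last, Function.comp_assoc]

section PsiImage

variable {X : Type*} {m : ℕ} (ψ : Fin m → X → X) (N : ℕ → Finset (Fin m))

lemma continuous_iterMap [TopologicalSpace X] (hψ : ∀ j, Continuous (ψ j)) :
    ∀ (k : ℕ) (j : Fin k → Fin m), Continuous (iterMap ψ k j)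
  | 0, _ => continuous_id
  | k + 1, j => (hψ (j 0)).comp (continuous_iterMap hψ k fun i => j i.succ)

lemma isCompact_psiImage [TopologicalSpace X] (hψ : ∀ j, Continuous (ψ j)) {F : Set X}
    (hF : IsCompact F) (k : ℕ) : IsCompact (psiImage ψ N k F) :=
  (Lk N k).finite_toSet.isCompact_biUnion fun j _ => hF.image (continuous_iterMap ψ hψ k j)

lemma psiImage_nonempty (hN : ∀ k, 1 ≤ k → (N k).Nonempty) {F : Set X} (hF : F.Nonempty)
    (k : ℕ) : (psiImage ψ N k F).Nonempty := by
  choose j hj using fun i : Fin k => hN (i + 1) (by omega)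
  obtain ⟨x, hx⟩ := hF
  exact ⟨iterMap ψ k j x, mem_biUnion (by simpa [Lk] using hj) (mem_image_of_mem _ hx)⟩

lemma antitone_psiImage {F : Set X} (hF : ∀ j, MapsTo (ψ j) F F) :
    Antitone fun k => psiImage ψ N k F := by
  refine antitone_nat_of_succ_le fun k x hx => ?_
  obtain ⟨j, hj, y, hy, rfl⟩ := mem_iUnion₂.mp hx
  rw [iterMap_succ']
  have hj' : (fun i : Fin k => j i.castSucc) ∈ Lk N k := by
    simp only [Lk, Finset.mem_filter, Finset.mem_univ, true_and] at hj ⊢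
    exact fun i => by simpa using hj i.castSucc
  exact mem_biUnion hj' (mem_image_of_mem _ (hF _ hy))

end PsiImage

section HausdorffLimit

variable {X : Type*} [MetricSpace X] {S : ℕ → Set X} {E : Set X}

lemma subset_of_antitone_of_tendsto_hausdorffDist (hanti : Antitone S)
    (hS : ∀ k, IsCompact (S k)) (hSne : ∀ k, (S k).Nonempty) (hE : Bornology.IsBounded E)
    (hEne : E.Nonempty) (hlim : Tendsto (fun k => hausdorffDist (S k) E) atTop (nhds 0))
    (k : ℕ) : E ⊆ S k := by
  intro x hx
  have hdist : infDist x (S k) ≤ 0 := by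
    refine ge_of_tendsto hlim (eventually_atTop.mpr ⟨k, fun k' hk' => ?_⟩)
    calc infDist x (S k) ≤ infDist x (S k') := infDist_le_infDist_of_subset (hanti hk') (hSne k')
      _ ≤ hausdorffDist E (S k') := infDist_le_hausdorffDist_of_mem hx <|
          hausdorffEDist_ne_top_of_nonempty_of_bounded hEne (hSne k') hE (hS k').isBounded
      _ = hausdorffDist (S k') E := hausdorffDist_comm
  exact ((hS k).isClosed.mem_iff_infDist_zero (hSne k)).mpr (hdist.antisymm infDist_nonneg)

lemma mem_of_eventually_mem_of_tendsto_hausdorffDist (hS : ∀ k, IsCompact (S k))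
    (hSne : ∀ k, (S k).Nonempty) (hE : IsCompact E) (hEne : E.Nonempty)
    (hlim : Tendsto (fun k => hausdorffDist (S k) E) atTop (nhds 0)) {x : X}
    (hx : ∀ᶠ k in atTop, x ∈ S k) : x ∈ E := by
  have hdist : infDist x E ≤ 0 := ge_of_tendsto hlim <| hx.mono fun k hk =>
    infDist_le_hausdorffDist_of_mem hk <|
      hausdorffEDist_ne_top_of_nonempty_of_bounded (hSne k) hEne (hS k).isBounded hE.isBounded
  exact (hE.isClosed.mem_iff_infDist_zero hEne).mpr (hdist.antisymm infDist_nonneg)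

end HausdorffLimit

theorem stmt7_general {n m : ℕ}
    (ψ : Fin m → EuclideanSpace ℝ (Fin n) → EuclideanSpace ℝ (Fin n)) (r : Fin m → ℝ)
    (hψ : ∀ j x y, dist (ψ j x) (ψ j y) = r j * dist x y)
    (N : ℕ → Finset (Fin m)) (hN : ∀ k, 1 ≤ k → (N k).Nonempty)
    (V : Set (EuclideanSpace ℝ (Fin n)))
    (hVb : Bornology.IsBounded V) (hVne : V.Nonempty)
    (hmap : ∀ j, ψ j '' V ⊆ V)
    (E : Set (EuclideanSpace ℝ (Fin n))) (hE : IsCompact E) (hEne : E.Nonempty)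
    (hconv : ∀ F : Set (EuclideanSpace ℝ (Fin n)), IsCompact F → F.Nonempty →
      Tendsto (fun k => hausdorffDist (psiImage ψ N k F) E) atTop (nhds 0)) :
    (∀ k, IsCompact (psiImage ψ N k (closure V))) ∧
    (Antitone fun k => psiImage ψ N k (closure V)) ∧
    E = ⋂ k : ℕ, ⋂ (_ : 1 ≤ k), psiImage ψ N k (closure V) := by
  have hcont : ∀ j, Continuous (ψ j) := fun j => continuous_of_dist_eq_mul (hψ j)
  have hVc : IsCompact (closure V) := hVb.isCompact_closure
  have hmapsTo : ∀ j, MapsTo (ψ j) (closure V) (closure V) := fun j =>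
    (mapsTo_iff_image_subset.mpr (hmap j)).closure (hcont j)
  have hS := isCompact_psiImage ψ N hcont hVc
  have hSne := psiImage_nonempty ψ N hN hVne.closure
  have hanti := antitone_psiImage ψ N hmapsTo
  have hlim := hconv _ hVc hVne.closure
  refine ⟨hS, hanti, Subset.antisymm ?_ fun x hx => ?_⟩
  · exact subset_iInter₂ fun k _ =>
      subset_of_antitone_of_tendsto_hausdorffDist hanti hS hSne hE.isBounded hEne hlim k
  · exact mem_of_eventually_mem_of_tendsto_hausdorffDist hS hSne hE hEne hlim
      (eventually_atTop.mpr ⟨1, fun k hk => mem_iInter₂.mp hx k hk⟩)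

/-- Under the open set condition with bounded open set `V`, the sets `ψ^k(V̄)` form a
decreasing sequence of compact sets whose intersection over `k ≥ 1` is the limit set `E`. -/
theorem stmt7 {n m : ℕ}
    (ψ : Fin m → EuclideanSpace ℝ (Fin n) → EuclideanSpace ℝ (Fin n)) (r : Fin m → ℝ)
    (hψ : ∀ j x y, dist (ψ j x) (ψ j y) = r j * dist x y) (hr : ∀ j, r j < 1)
    (N : ℕ → Finset (Fin m)) (hN : ∀ k, 1 ≤ k → (N k).Nonempty)
    (V : Set (EuclideanSpace ℝ (Fin n))) (hVo : IsOpen V)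
    (hVb : Bornology.IsBounded V) (hVne : V.Nonempty)
    (hmap : ∀ j, ψ j '' V ⊆ V)
    (hdisj : ∀ i j, i ≠ j → Disjoint (ψ i '' V) (ψ j '' V))
    (E : Set (EuclideanSpace ℝ (Fin n))) (hE : IsCompact E) (hEne : E.Nonempty)
    (hconv : ∀ F : Set (EuclideanSpace ℝ (Fin n)), IsCompact F → F.Nonempty →
      Tendsto (fun k => hausdorffDist (psiImage ψ N k F) E) atTop (nhds 0)) :
    (∀ k, IsCompact (psiImage ψ N k (closure V))) ∧
    (Antitone fun k => psiImage ψ N k (closure V)) ∧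
    E = ⋂ k : ℕ, ⋂ (_ : 1 ≤ k), psiImage ψ N k (closure V) :=
  stmt7_general ψ r hψ N hN V hVb hVne hmap E hE hEne hconv
end
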